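/- The discriminant D_{F̃} of F̃ satisfies deg D_{F̃} ≤ (2n−2)d and h(D_{F̃}) ≤ (2n−2)·( log( 2n² · C(d+r, r) ) + h ), where C(d+r, r) is the binomial coefficient (d+r choose r). -/

import Mathlib

/-!
Each entry of `discMat n ã` is `c • ãₖ` with `c ≤ n` and `k ≤ n`, hence has total degree
at most `d`, at most `C(d+r, r)` monomials, and coefficients of absolute value at most `n eʰ`.
In the Leibniz expansion of the determinant of size `N = 2n-2`, a product of `N` entries then
has total degree at most `N d` and, bounding the coefficients of `p * q` by
`#supp p · max|p| · max|q|`, coefficients at most `(C(d+r, r) n eʰ)^N`. With `N! ≤ (2n)^N`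
every coefficient of the discriminant is at most `(2n² C(d+r, r) eʰ)^N`.
-/

open scoped BigOperators

/-- The logarithmic height of an integer multivariate polynomial: the logarithm of the
maximum of the absolute values of its coefficients. -/
noncomputable def mheight {r : ℕ} (g : MvPolynomial (Fin r) ℤ) : ℝ :=
  Real.log ((g.support.sup fun m => (g.coeff m).natAbs : ℕ) : ℝ)

/-- The `(2n-2) × (2n-2)` matrix whose determinant is (up to sign) the discriminant of the
binary form `a₀ Xⁿ + a₁ Xⁿ⁻¹ Y + ⋯ + aₙ Yⁿ`. -/
def discMat {R : Type*} [CommRing R] (n : ℕ) (a : ℕ → R) :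
    Matrix (Fin (2*n-2)) (Fin (2*n-2)) R := fun i j =>
  if (i : ℕ) < n - 2 then
    (if (i : ℕ) ≤ (j : ℕ) ∧ (j : ℕ) ≤ (i : ℕ) + n then a ((j : ℕ) - (i : ℕ)) else 0)
  else if (i : ℕ) = n - 2 then
    (if (j : ℕ) + 1 ≤ n then (((j : ℕ) + 1 : ℕ) : R) * a ((j : ℕ) + 1) else 0)
  else
    (if (i : ℕ) - (n - 1) ≤ (j : ℕ) ∧ (j : ℕ) ≤ (i : ℕ) - (n - 1) + (n - 1)
      then ((n - ((j : ℕ) - ((i : ℕ) - (n - 1))) : ℕ) : R) * a ((j : ℕ) - ((i : ℕ) - (n - 1)))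
      else 0)

/-- The discriminant of the binary form with coefficients `a 0, …, a n`. -/
noncomputable def binDisc {R : Type*} [CommRing R] (n : ℕ) (a : ℕ → R) : R := (discMat n a).det

open Finset MvPolynomial
open scoped Nat

variable {σ R : Type*}

theorem Finsupp.card_le_choose_of_degree_le {r d : ℕ} {s : Finset (Fin r →₀ ℕ)}
    (hs : ∀ m ∈ s, m.degree ≤ d) : #s ≤ (d + r).choose r := by
  calc #s ≤ #((univ : Finset (Fin (r + 1))).finsuppAntidiag d) := by
        refine card_le_card_of_injOn (fun m => Finsupp.cons (d - m.degree) m) (fun m hm => ?_)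
          fun m _ m' _ h => (Finsupp.cons_injective2 h).2
        rw [mem_coe, mem_finsuppAntidiag, Fin.sum_univ_succ, Finsupp.cons_zero]
        simp only [Finsupp.cons_succ, ← Finsupp.degree_eq_sum]
        exact ⟨Nat.sub_add_cancel (hs m hm), subset_univ _⟩
    _ = (d + r).choose r := by
        rw [card_finsuppAntidiag_nat_eq_choose, card_univ, Fintype.card_fin,
          show r + 1 + d - 1 = d + r by omega, Nat.choose_symm_add]

namespace MvPolynomial

theorem card_support_le_choose {r d : ℕ} [CommSemiring R] {p : MvPolynomial (Fin r) R}
    (hp : p.totalDegree ≤ d) : #p.support ≤ (d + r).choose r :=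
  Finsupp.card_le_choose_of_degree_le fun _ hm => (le_totalDegree hm).trans hp

theorem totalDegree_det_le {ι : Type*} [Fintype ι] [DecidableEq ι] [CommRing R]
    {M : Matrix ι ι (MvPolynomial σ R)} {d : ℕ} (hM : ∀ i j, (M i j).totalDegree ≤ d) :
    M.det.totalDegree ≤ Fintype.card ι * d := by
  rw [Matrix.det_apply]
  refine totalDegree_finsetSum_le fun τ _ => (totalDegree_smul_le _ _).trans ?_
  refine (totalDegree_finsetProd _ _).trans ?_
  simpa using sum_le_sum fun i (_ : i ∈ univ) => hM (τ i) i

section Norm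

variable [NormedCommRing R]

theorem norm_coeff_mul_le {p q : MvPolynomial σ R} {A B : ℝ} (hp : ∀ m, ‖p.coeff m‖ ≤ A)
    (hq : ∀ m, ‖q.coeff m‖ ≤ B) (m : σ →₀ ℕ) : ‖(p * q).coeff m‖ ≤ #p.support * (A * B) := by
  have hAB : 0 ≤ A * B := mul_nonneg ((norm_nonneg _).trans (hp 0)) ((norm_nonneg _).trans (hq 0))
  calc ‖(p * q).coeff m‖ = ‖∑ s ∈ p.support, (monomial s (p.coeff s) * q).coeff m‖ := by
        rw [← coeff_sum, ← sum_mul, support_sum_monomial_coeff]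
    _ ≤ ∑ s ∈ p.support, ‖(monomial s (p.coeff s) * q).coeff m‖ := norm_sum_le _ _
    _ ≤ ∑ _s ∈ p.support, A * B := sum_le_sum fun s _ => by
        rw [coeff_monomial_mul']
        split_ifs
        · exact (norm_mul_le _ _).trans (mul_le_mul (hp s) (hq _) (norm_nonneg _)
            ((norm_nonneg _).trans (hp s)))
        · simpa using hAB
    _ = #p.support * (A * B) := by rw [sum_const, nsmul_eq_mul]

theorem norm_coeff_prod_le [NormOneClass R] {ι : Type*} {s : Finset ι}
    {f : ι → MvPolynomial σ R} {K : ℕ} {A : ℝ} (hK : ∀ i ∈ s, #(f i).support ≤ K)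
    (hA : ∀ i ∈ s, ∀ m, ‖(f i).coeff m‖ ≤ A) (m : σ →₀ ℕ) :
    ‖(∏ i ∈ s, f i).coeff m‖ ≤ (K * A) ^ #s := by
  classical
  induction s using Finset.cons_induction generalizing m with
  | empty => rw [prod_empty, coeff_one]; split_ifs <;> simp
  | cons a s ha ih =>
    have hA0 : 0 ≤ A := (norm_nonneg _).trans (hA a (mem_cons_self a s) 0)
    rw [prod_cons, card_cons, pow_succ']
    refine (norm_coeff_mul_le (hA a (mem_cons_self a s))
      (ih (fun i hi => hK i (mem_cons_of_mem hi)) fun i hi => hA i (mem_cons_of_mem hi)) m).trans ?_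
    rw [← mul_assoc]
    gcongr
    exact_mod_cast hK a (mem_cons_self a s)

theorem norm_coeff_det_le [NormOneClass R] {ι : Type*} [Fintype ι] [DecidableEq ι]
    {M : Matrix ι ι (MvPolynomial σ R)} {K : ℕ} {A : ℝ} (hK : ∀ i j, #(M i j).support ≤ K)
    (hA : ∀ i j m, ‖(M i j).coeff m‖ ≤ A) (m : σ →₀ ℕ) :
    ‖M.det.coeff m‖ ≤ (Fintype.card ι)! * (K * A) ^ Fintype.card ι := by
  rw [Matrix.det_apply, coeff_sum]
  refine (norm_sum_le _ _).trans ?_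
  calc ∑ τ : Equiv.Perm ι, ‖(Equiv.Perm.sign τ • ∏ i, M (τ i) i).coeff m‖
      ≤ ∑ _τ : Equiv.Perm ι, (K * A) ^ Fintype.card ι := sum_le_sum fun τ _ => by
        rw [coeff_smul, norm_units_zsmul]
        exact norm_coeff_prod_le (fun i _ => hK _ _) (fun i _ => hA _ _) m
    _ = (Fintype.card ι)! * (K * A) ^ Fintype.card ι := by
        rw [sum_const, nsmul_eq_mul, card_univ, Fintype.card_perm]

end Norm

end MvPolynomial

theorem Int.norm_eq_natCast_natAbs (z : ℤ) : ‖z‖ = z.natAbs := by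
  simp [Int.norm_eq_abs]

section Height

variable {r : ℕ}

theorem mheight_nonneg (p : MvPolynomial (Fin r) ℤ) : 0 ≤ mheight p :=
  Real.log_natCast_nonneg _

theorem norm_coeff_le_exp_mheight (p : MvPolynomial (Fin r) ℤ) (m : Fin r →₀ ℕ) :
    ‖p.coeff m‖ ≤ Real.exp (mheight p) := by
  have hm : (p.coeff m).natAbs ≤ p.support.sup fun m => (p.coeff m).natAbs := by
    by_cases hm : m ∈ p.support
    · exact le_sup (f := fun m => (p.coeff m).natAbs) hm
    · simp [notMem_support_iff.mp hm]
  rw [Int.norm_eq_natCast_natAbs]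
  exact (Nat.cast_le.mpr hm).trans (Real.le_exp_log _)

theorem mheight_le_log {p : MvPolynomial (Fin r) ℤ} {M : ℝ} (hM : 1 ≤ M)
    (hp : ∀ m, ‖p.coeff m‖ ≤ M) : mheight p ≤ Real.log M := by
  have hsup : (p.support.sup fun m => (p.coeff m).natAbs) ≤ ⌊M⌋₊ :=
    Finset.sup_le fun m _ => Nat.le_floor (Int.norm_eq_natCast_natAbs _ ▸ hp m)
  unfold mheight
  rcases Nat.eq_zero_or_pos (p.support.sup fun m => (p.coeff m).natAbs) with h0 | hpos
  · rw [h0, Nat.cast_zero, Real.log_zero]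
    exact Real.log_nonneg hM
  · exact Real.log_le_log (by exact_mod_cast hpos)
      ((Nat.cast_le.mpr hsup).trans (Nat.floor_le (zero_le_one.trans hM)))

end Height

theorem exists_discMat_apply_eq_nsmul [CommRing R] (n : ℕ) (a : ℕ → R)
    (i j : Fin (2 * n - 2)) : ∃ c ≤ n, ∃ k ≤ n, discMat n a i j = c • a k := by
  have hi := i.isLt
  simp only [discMat, nsmul_eq_mul]
  split_ifs
  · exact ⟨1, by omega, j - i, by omega, by rw [Nat.cast_one, one_mul]⟩
  · exact ⟨0, by omega, 0, by omega, by rw [Nat.cast_zero, zero_mul]⟩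
  · exact ⟨_, by omega, _, by omega, rfl⟩
  · exact ⟨0, by omega, 0, by omega, by rw [Nat.cast_zero, zero_mul]⟩
  · exact ⟨_, by omega, _, by omega, rfl⟩
  · exact ⟨0, by omega, 0, by omega, by rw [Nat.cast_zero, zero_mul]⟩

section DiscMat

variable {n d : ℕ}

theorem totalDegree_binDisc_le [CommRing R] {a : ℕ → MvPolynomial σ R}
    (ha : ∀ k ≤ n, (a k).totalDegree ≤ d) : (binDisc n a).totalDegree ≤ (2 * n - 2) * d := by
  simpa [binDisc] using totalDegree_det_le (M := discMat n a) fun i j => by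
    obtain ⟨c, -, k, hk, he⟩ := exists_discMat_apply_eq_nsmul n a i j
    exact he ▸ (totalDegree_smul_le _ _).trans (ha k hk)

theorem card_support_discMat_le {r : ℕ} [CommRing R] {a : ℕ → MvPolynomial (Fin r) R}
    (ha : ∀ k ≤ n, (a k).totalDegree ≤ d) (i j : Fin (2 * n - 2)) :
    #(discMat n a i j).support ≤ (d + r).choose r := by
  obtain ⟨c, -, k, hk, he⟩ := exists_discMat_apply_eq_nsmul n a i j
  exact he ▸ (card_le_card support_smul).trans (card_support_le_choose (ha k hk))

theorem norm_coeff_discMat_le [NormedCommRing R] {a : ℕ → MvPolynomial σ R} {A : ℝ}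
    (ha : ∀ k ≤ n, ∀ m, ‖(a k).coeff m‖ ≤ A) (i j : Fin (2 * n - 2)) (m : σ →₀ ℕ) :
    ‖(discMat n a i j).coeff m‖ ≤ n * A := by
  obtain ⟨c, hc, k, hk, he⟩ := exists_discMat_apply_eq_nsmul n a i j
  rw [he, coeff_smul]
  exact norm_nsmul_le.trans (mul_le_mul (by exact_mod_cast hc) (ha k hk m) (norm_nonneg _)
    (Nat.cast_nonneg _))

theorem norm_coeff_binDisc_le {r : ℕ} [NormedCommRing R] [NormOneClass R]
    {a : ℕ → MvPolynomial (Fin r) R} {A : ℝ} (hdeg : ∀ k ≤ n, (a k).totalDegree ≤ d)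
    (hcoeff : ∀ k ≤ n, ∀ m, ‖(a k).coeff m‖ ≤ A) (m : Fin r →₀ ℕ) :
    ‖(binDisc n a).coeff m‖ ≤ (2 * n ^ 2 * (d + r).choose r * A) ^ (2 * n - 2) := by
  have hA : 0 ≤ A := (norm_nonneg _).trans (hcoeff 0 n.zero_le 0)
  have hfac : ((2 * n - 2)! : ℝ) ≤ (2 * n : ℝ) ^ (2 * n - 2) := by
    exact_mod_cast (Nat.factorial_le_pow _).trans (Nat.pow_le_pow_left (by omega) _)
  have hdet := norm_coeff_det_le (card_support_discMat_le hdeg) (norm_coeff_discMat_le hcoeff) m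
  rw [Fintype.card_fin] at hdet
  refine hdet.trans ?_
  calc ((2 * n - 2)! : ℝ) * ((d + r).choose r * (n * A)) ^ (2 * n - 2)
      ≤ (2 * n) ^ (2 * n - 2) * ((d + r).choose r * (n * A)) ^ (2 * n - 2) := by gcongr
    _ = (2 * n ^ 2 * (d + r).choose r * A) ^ (2 * n - 2) := by rw [← mul_pow]; ring

end DiscMat

theorem disc_deg_height_bound_general
    (r n d : ℕ) (h : ℝ) (hn : 2 ≤ n)
    (ta : ℕ → MvPolynomial (Fin r) ℤ)
    (hdeg : ∀ i, i ≤ n → (ta i).totalDegree ≤ d)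
    (hht : ∀ i, i ≤ n → mheight (ta i) ≤ h) :
    (binDisc n ta).totalDegree ≤ (2 * n - 2) * d ∧
      mheight (binDisc n ta) ≤
        ((2 * n - 2 : ℕ) : ℝ) *
          (Real.log (2 * (n : ℝ) ^ 2 * ((d + r).choose r : ℝ)) + h) := by
  refine ⟨totalDegree_binDisc_le hdeg, ?_⟩
  have hcoeff : ∀ k ≤ n, ∀ m, ‖(ta k).coeff m‖ ≤ Real.exp h := fun k hk m =>
    (norm_coeff_le_exp_mheight _ m).trans (Real.exp_le_exp.mpr (hht k hk))
  have hx : 1 ≤ 2 * (n : ℝ) ^ 2 * (d + r).choose r := by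
    have hB : (1 : ℝ) ≤ (d + r).choose r := by exact_mod_cast Nat.choose_pos (by omega)
    have hn' : (2 : ℝ) ≤ n := by exact_mod_cast hn
    nlinarith
  have he : 1 ≤ Real.exp h := Real.one_le_exp ((mheight_nonneg _).trans (hht 0 n.zero_le))
  refine (mheight_le_log (one_le_pow₀ (one_le_mul_of_one_le_of_one_le hx he))
    (norm_coeff_binDisc_le hdeg hcoeff)).trans_eq ?_
  rw [Real.log_pow, Real.log_mul (by positivity) (Real.exp_ne_zero h), Real.log_exp]

/-- **Lemma 3.2.**  If `F̃` is a binary form of degree `n ≥ 2` whose coefficients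
`ã₀, …, ãₙ ∈ ℤ[X₁,…,X_r]` have total degrees `≤ d` and logarithmic heights `≤ h`, then its
discriminant satisfies `deg D_{F̃} ≤ (2n-2) d` and
`h(D_{F̃}) ≤ (2n-2) ( log(2 n² (d+r choose r)) + h )`. -/
theorem disc_deg_height_bound
    (r n d : ℕ) (h : ℝ) (hn : 2 ≤ n) (hd : 1 ≤ d) (hh : 1 ≤ h)
    (ta : ℕ → MvPolynomial (Fin r) ℤ)
    (hdeg : ∀ i, i ≤ n → (ta i).totalDegree ≤ d)
    (hht : ∀ i, i ≤ n → mheight (ta i) ≤ h) :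
    (binDisc n ta).totalDegree ≤ (2 * n - 2) * d ∧
      mheight (binDisc n ta) ≤
        ((2 * n - 2 : ℕ) : ℝ) *
          (Real.log (2 * (n : ℝ) ^ 2 * ((d + r).choose r : ℝ)) + h) :=
  disc_deg_height_bound_general r n d h hn ta hdeg hht
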